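/- Grover's diffusion circuit implements (the negative of) the diffusion operator: for every n ≥ 1, the matrix product H^{⊗n} · X^{⊗n} · CZ_n · X^{⊗n} · H^{⊗n} equals −(2·|ψ⟩⟨ψ| − I), where |ψ⟩ ∈ ℂ^(2^n) is the uniform superposition with all entries 1/√(2^n), CZ_n is the 2^n × 2^n diagonal matrix with all diagonal entries 1 except the last entry −1 (the multi-controlled Z gate), and |ψ⟩⟨ψ| is the rank-one matrix with all entries 1/2^n. -/
import Mathlib


open Matrix

/-- Hadamard gate. -/
noncomputable def Hgate : Matrix (Fin 2) (Fin 2) ℂ :=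
  ((Real.sqrt 2 : ℂ))⁻¹ • !![1, 1; 1, -1]

/-- NOT gate. -/
def Xgate : Matrix (Fin 2) (Fin 2) ℂ := !![0, 1; 1, 0]

/-- `n`-fold Kronecker power of the Hadamard gate, on vectors indexed by bit strings. -/
noncomputable def Hkron (n : ℕ) : Matrix (Fin n → Fin 2) (Fin n → Fin 2) ℂ :=
  Matrix.of fun p q => ∏ i, Hgate (p i) (q i)

/-- `n`-fold Kronecker power of the NOT gate. -/
def Xkron (n : ℕ) : Matrix (Fin n → Fin 2) (Fin n → Fin 2) ℂ :=
  Matrix.of fun p q => ∏ i, Xgate (p i) (q i)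

/-- The multi-controlled Z gate: diagonal with all entries 1 except the last
(all-ones) entry, which is −1. -/
def CZn (n : ℕ) : Matrix (Fin n → Fin 2) (Fin n → Fin 2) ℂ :=
  Matrix.of fun p q =>
    if p = q then (if p = (fun _ => (1 : Fin 2)) then -1 else 1) else 0

/-- The rank-one projector `|ψ⟩⟨ψ|` onto the uniform superposition: all entries `1/2^n`. -/
noncomputable def uniformProj (n : ℕ) : Matrix (Fin n → Fin 2) (Fin n → Fin 2) ℂ :=
  Matrix.of fun _ _ => ((2 : ℂ) ^ n)⁻¹

lemma sq_isqrt : ((Real.sqrt 2 : ℂ))⁻¹ * ((Real.sqrt 2 : ℂ))⁻¹ = 2⁻¹ := by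
  rw [← mul_inv, ← Complex.ofReal_mul, Real.mul_self_sqrt (by norm_num)]
  norm_num

lemma Hgate_mul_self : Hgate * Hgate = 1 := by
  ext i j
  fin_cases i <;> fin_cases j <;>
    simp [Hgate, Matrix.mul_apply, Fin.sum_univ_two] <;>
    (try ring_nf) <;>
    (try linear_combination 2 * sq_isqrt)

lemma Hgate_zero_left (a : Fin 2) : Hgate 0 a = ((Real.sqrt 2 : ℂ))⁻¹ := by
  fin_cases a <;> simp [Hgate]

lemma Hgate_zero_right (a : Fin 2) : Hgate a 0 = ((Real.sqrt 2 : ℂ))⁻¹ := by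
  fin_cases a <;> simp [Hgate]

lemma Xgate_apply (a b : Fin 2) : Xgate a b = if b = a + 1 then 1 else 0 := by
  fin_cases a <;> fin_cases b <;> simp [Xgate] <;> decide

lemma kron_mul {n : ℕ} (A B : Matrix (Fin 2) (Fin 2) ℂ) :
    (Matrix.of fun p q : Fin n → Fin 2 => ∏ i, A (p i) (q i)) *
      (Matrix.of fun p q : Fin n → Fin 2 => ∏ i, B (p i) (q i)) =
    Matrix.of fun p q : Fin n → Fin 2 => ∏ i, (A * B) (p i) (q i) := by
  ext p q
  simp only [Matrix.mul_apply, Matrix.of_apply]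
  rw [Finset.prod_univ_sum]
  simp [Finset.prod_mul_distrib]


lemma Xkron_apply {n : ℕ} (p q : Fin n → Fin 2) :
    Xkron n p q = if q = (fun i => p i + 1) then 1 else 0 := by
  simp only [Xkron, Matrix.of_apply, Xgate_apply]
  by_cases h : q = fun i => p i + 1
  · subst h; simp
  · rw [if_neg h]
    obtain ⟨i, hi⟩ := Function.ne_iff.mp h
    exact Finset.prod_eq_zero (Finset.mem_univ i) (if_neg hi)

lemma add_one_one (a : Fin 2) : a + 1 + 1 = a := by fin_cases a <;> rfl

lemma Xkron_mul {n : ℕ} (M : Matrix (Fin n → Fin 2) (Fin n → Fin 2) ℂ) :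
    Xkron n * M = Matrix.of fun p q => M (fun i => p i + 1) q := by
  ext p q
  simp only [Matrix.mul_apply, Matrix.of_apply, Xkron_apply, ite_mul, one_mul, zero_mul]
  simp [Finset.sum_ite_eq', Finset.sum_ite_eq]

lemma mul_Xkron {n : ℕ} (M : Matrix (Fin n → Fin 2) (Fin n → Fin 2) ℂ) :
    M * Xkron n = Matrix.of fun p q => M p (fun i => q i + 1) := by
  ext p q
  simp only [Matrix.mul_apply, Matrix.of_apply, Xkron_apply, mul_ite, mul_one, mul_zero]
  have hc : ∀ r : Fin n → Fin 2, (q = fun i => r i + 1) ↔ (r = fun i => q i + 1) := by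
    intro r
    constructor <;> intro h <;> subst h <;> funext i <;> rw [add_one_one]
  simp_rw [hc]
  simp [Finset.sum_ite_eq', Finset.sum_ite_eq]

lemma XCZX {n : ℕ} : Xkron n * CZn n * Xkron n =
    Matrix.of fun p q : Fin n → Fin 2 =>
      if p = q then (if p = (fun _ => (0 : Fin 2)) then -1 else 1) else 0 := by
  rw [Xkron_mul, mul_Xkron]
  ext p q
  simp only [Matrix.of_apply, CZn]
  have h1 : ((fun i => p i + 1) = fun i => q i + 1) ↔ p = q := by
    constructor <;> intro h
    · funext i; have := congrFun h i; simpa using this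
    · subst h; rfl
  have h2 : ((fun i => p i + 1) = fun _ => (1 : Fin 2)) ↔ p = fun _ => (0 : Fin 2) := by
    have key : ∀ a : Fin 2, a + 1 = 1 ↔ a = 0 := by decide
    constructor <;> intro h <;> funext i <;> have := congrFun h i
    · exact (key (p i)).mp this
    · rw [this]; rfl
  simp only [h1, h2]


def Ez (n : ℕ) : Matrix (Fin n → Fin 2) (Fin n → Fin 2) ℂ :=
  Matrix.of fun p q => if p = (fun _ => (0 : Fin 2)) ∧ q = (fun _ => (0 : Fin 2)) then 1 else 0

lemma D_eq {n : ℕ} :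
    (Matrix.of fun p q : Fin n → Fin 2 =>
      if p = q then (if p = (fun _ => (0 : Fin 2)) then -1 else 1) else 0 :
        Matrix (Fin n → Fin 2) (Fin n → Fin 2) ℂ) = 1 - (2 : ℂ) • Ez n := by
  ext p q
  simp only [Matrix.of_apply, Matrix.sub_apply, Matrix.smul_apply, Matrix.one_apply, Ez,
    smul_eq_mul]
  split_ifs <;> simp_all <;> ring

lemma Hkron_mul_Hkron {n : ℕ} : Hkron n * Hkron n = 1 := by
  show (Matrix.of fun p q : Fin n → Fin 2 => ∏ i, Hgate (p i) (q i)) *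
    (Matrix.of fun p q : Fin n → Fin 2 => ∏ i, Hgate (p i) (q i)) = 1
  rw [kron_mul, Hgate_mul_self]
  ext p q
  simp only [Matrix.of_apply, Matrix.one_apply]
  by_cases h : p = q
  · subst h; simp
  · rw [if_neg h]
    obtain ⟨i, hi⟩ := Function.ne_iff.mp h
    exact Finset.prod_eq_zero (Finset.mem_univ i) (by simp [Matrix.one_apply, hi])

lemma Hkron_z {n : ℕ} (p : Fin n → Fin 2) :
    Hkron n p (fun _ => 0) = ((Real.sqrt 2 : ℂ))⁻¹ ^ n := by
  simp [Hkron, Hgate_zero_right]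

lemma z_Hkron {n : ℕ} (q : Fin n → Fin 2) :
    Hkron n (fun _ => 0) q = ((Real.sqrt 2 : ℂ))⁻¹ ^ n := by
  simp [Hkron, Hgate_zero_left]

lemma HEzH {n : ℕ} : Hkron n * Ez n * Hkron n = uniformProj n := by
  ext p q
  rw [Matrix.mul_apply]
  have h1 : ∀ s, (Hkron n * Ez n) p s =
      if s = (fun _ => (0 : Fin 2)) then ((Real.sqrt 2 : ℂ))⁻¹ ^ n else 0 := by
    intro s
    rw [Matrix.mul_apply]
    by_cases hs : s = (fun _ => (0 : Fin 2))
    · subst hs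
      simp only [Ez, Matrix.of_apply, and_true, mul_ite, mul_one, mul_zero, if_pos rfl]
      rw [Finset.sum_ite_eq' Finset.univ _ (fun r => Hkron n p r)]
      simp [Hkron_z]
    · simp [Ez, hs]
  simp_rw [h1, ite_mul, zero_mul]
  rw [Finset.sum_ite_eq' Finset.univ _
    (fun s => ((Real.sqrt 2 : ℂ))⁻¹ ^ n * Hkron n s q)]
  simp only [Finset.mem_univ, if_true, z_Hkron, uniformProj, Matrix.of_apply]
  rw [← mul_pow, sq_isqrt, ← inv_pow]

/-- Grover's diffusion circuit implements (the negative of) the diffusion operator: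
`H^{⊗n} · X^{⊗n} · CZ_n · X^{⊗n} · H^{⊗n} = −(2·|ψ⟩⟨ψ| − I)`. -/
theorem grover_diffusion_circuit (n : ℕ) (hn : 1 ≤ n) :
    Hkron n * Xkron n * CZn n * Xkron n * Hkron n =
      -((2 : ℂ) • uniformProj n - 1) := by
  have h : Hkron n * Xkron n * CZn n * Xkron n * Hkron n
      = Hkron n * (Xkron n * CZn n * Xkron n) * Hkron n := by noncomm_ring
  rw [h, XCZX, D_eq, mul_sub, sub_mul, mul_one, mul_smul_comm, smul_mul_assoc,
    Hkron_mul_Hkron, HEzH, neg_sub]
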